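/- Let I be a homogeneous ideal of R = K[x_1,...,x_n], ℓ a linear form avoiding all primes in ∪_{j} Ass(R/I_⟨j⟩) other than M, and S = R[M/ℓ]. Then I ⊆ IS ∩ R ⊆ Ī, where Ī is the integral closure of I. -/

import Mathlib

open MvPolynomial

noncomputable section

/-- The polynomial ring `R = K[x_1,…,x_n]`. -/
abbrev Rn (K : Type) [Field K] (n : ℕ) : Type := MvPolynomial (Fin n) K

/-- The irrelevant maximal ideal `M = (x_1,…,x_n)`. -/
def Mi (K : Type) [Field K] (n : ℕ) : Ideal (Rn K n) :=
  Ideal.span (Set.range (X : Fin n → Rn K n))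

variable {K : Type} [Field K] {n : ℕ}

/-- `I` is a homogeneous ideal. -/
def IsHomog (I : Ideal (Rn K n)) : Prop :=
  ∀ f ∈ I, ∀ j : ℕ, homogeneousComponent j f ∈ I

/-- `I_⟨j⟩`, the ideal generated by the degree-`j` forms in `I`. -/
def comp (I : Ideal (Rn K n)) (j : ℕ) : Ideal (Rn K n) :=
  Ideal.span {f | f ∈ I ∧ f.IsHomogeneous j}

/-- The saturation `I^sat = I : M^∞`. -/
def sat (I : Ideal (Rn K n)) : Ideal (Rn K n) :=
  ⨆ k : ℕ, I.colon ((Mi K n ^ k : Ideal (Rn K n)) : Set (Rn K n))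

/-- `I : g^∞`. -/
def colonInfty (I : Ideal (Rn K n)) (g : Rn K n) : Ideal (Rn K n) :=
  ⨆ k : ℕ, I.colon (Ideal.span {g ^ k})

/-- The initial degree (order) `o(I)` of a homogeneous ideal. -/
def order (I : Ideal (Rn K n)) : ℕ :=
  sInf {j | ∃ f ∈ I, f ≠ 0 ∧ f.IsHomogeneous j}

/-- The quadratic extension `S = R[M/ℓ] = ∪_k M^k/ℓ^k ⊆ R_ℓ`. -/
def quadExt (ℓ : Rn K n) : Subalgebra (Rn K n) (Localization.Away ℓ) :=
  Algebra.adjoin (Rn K n)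
    {x | ∃ m ∈ Mi K n,
      x * algebraMap (Rn K n) (Localization.Away ℓ) ℓ =
        algebraMap (Rn K n) (Localization.Away ℓ) m}

/-- The contraction `IS ∩ R` of `I` from `S = R[M/ℓ]`. -/
def contraction (I : Ideal (Rn K n)) (ℓ : Rn K n) : Ideal (Rn K n) :=
  Ideal.comap (algebraMap (Rn K n) (quadExt ℓ))
    (Ideal.map (algebraMap (Rn K n) (quadExt ℓ)) I)

/-- `I` is contracted (from a quadratic extension). -/
def IsContracted (I : Ideal (Rn K n)) : Prop :=
  ∃ ℓ : Rn K n, ℓ ≠ 0 ∧ ℓ.IsHomogeneous 1 ∧ I = contraction I ℓ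

/-- `I` is `M`-full. -/
def IsMFull (I : Ideal (Rn K n)) : Prop :=
  ∃ ℓ : Rn K n, ℓ ≠ 0 ∧ ℓ.IsHomogeneous 1 ∧ (I * Mi K n).colon (Ideal.span {ℓ}) = I

/-- The minimal number of generators `μ(I)`. -/
def mu (I : Ideal (Rn K n)) : ℕ :=
  sInf {k | ∃ s : Finset (Rn K n), s.card = k ∧ Ideal.span (s : Set (Rn K n)) = I}

/-- The integral closure of an ideal, as a set: elements satisfying an equation
`a^t + r_1 a^{t-1} + … + r_t = 0` with `r_i ∈ I^i`. -/
def intClo {A : Type} [CommRing A] (I : Ideal A) : Set A :=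
  {a | ∃ (t : ℕ) (r : ℕ → A), 0 < t ∧ (∀ i, 1 ≤ i → i ≤ t → r i ∈ I ^ i) ∧
    a ^ t + ∑ i ∈ Finset.Icc 1 t, r i * a ^ (t - i) = 0}

/-- `I` is integrally closed. -/
def IsIC {A : Type} [CommRing A] (I : Ideal A) : Prop :=
  ∀ a ∈ intClo I, a ∈ I

/-- The class `C`: finite-colength homogeneous ideals with `I + (ℓ) = M^{o(I)} + (ℓ)`
for some nonzero linear form `ℓ`, which are contracted. -/
def InC (I : Ideal (Rn K n)) : Prop :=
  IsHomog I ∧ (∃ m : ℕ, Mi K n ^ m ≤ I) ∧ IsContracted I ∧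
    ∃ ℓ : Rn K n, ℓ ≠ 0 ∧ ℓ.IsHomogeneous 1 ∧
      I + Ideal.span {ℓ} = Mi K n ^ order I + Ideal.span {ℓ}

/-- `(b, dg, φ, π)` is a graded free resolution of the homogeneous ideal `J`:
the `i`-th free module has basis `Fin (b i)` with generators in degrees `dg i`,
the maps are given by matrices with homogeneous entries of the appropriate degrees,
and the complex is exact. -/
def IsGradedRes (J : Ideal (Rn K n)) (b : ℕ → ℕ) (dg : (i : ℕ) → Fin (b i) → ℕ)
    (φ : (i : ℕ) → Matrix (Fin (b i)) (Fin (b (i + 1))) (Rn K n))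
    (π : Fin (b 0) → Rn K n) : Prop :=
  (∀ c, π c ∈ J) ∧ (∀ c, (π c).IsHomogeneous (dg 0 c)) ∧
    J = Ideal.span (Set.range π) ∧
    (∀ i r c, (φ i) r c = 0 ∨ ∃ e, ((φ i) r c).IsHomogeneous e ∧ dg i r + e = dg (i + 1) c) ∧
    LinearMap.ker (Matrix.mulVecLin (Matrix.of fun (_ : Fin 1) c => π c)) =
      LinearMap.range (Matrix.mulVecLin (φ 0)) ∧
    ∀ i, LinearMap.ker (Matrix.mulVecLin (φ i)) = LinearMap.range (Matrix.mulVecLin (φ (i + 1)))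

/-- `reg J ≤ m`: `J` admits a graded free resolution with `i`-th shifts at most `m + i`. -/
def RegLE (J : Ideal (Rn K n)) (m : ℕ) : Prop :=
  ∃ b dg φ π, IsGradedRes J b dg φ π ∧ ∀ i c, dg i c ≤ m + i

/-- The Castelnuovo–Mumford regularity of a homogeneous ideal. -/
def regId (J : Ideal (Rn K n)) : ℕ := sInf {m | RegLE J m}

/-- `J` has a linear resolution (generated in degree `d` with `i`-th syzygies in degree `d+i`). -/
def HasLinRes (J : Ideal (Rn K n)) (d : ℕ) : Prop :=
  ∃ b dg φ π, IsGradedRes J b dg φ π ∧ ∀ i c, dg i c = d + i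

/-- `I` is componentwise linear. -/
def CompLinear (I : Ideal (Rn K n)) : Prop :=
  ∀ d : ℕ, HasLinRes (comp I d) d

/-! Clearing denominators, `x ∈ IS ∩ R` means `ℓ^k x ∈ I M^k` for some `k`. Comparing homogeneous
components gives `ℓ^k x_d ∈ I_⟨d⟩` for every degree `d`. Since `ℓ` lies in no associated prime of
`R/I_⟨d⟩` other than `M`, the only prime that can be associated to the class of `x_d` is `M`, so
`M^e x_d ⊆ I_⟨d⟩` for large `e`; reading off degrees again yields `x M^m ⊆ I M^m` for large `m`.
The determinant trick on the finitely generated faithful module `M^m` then gives an equation of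
integral dependence of `x` over `I`. -/

theorem exists_pow_smul_eq_zero_of_pow_smul_eq_zero {A M : Type*} [CommRing A]
    [IsNoetherianRing A] [AddCommGroup M] [Module A M] {𝔪 : Ideal A} {ℓ : A}
    (hℓ : ∀ P ∈ associatedPrimes A M, P ≠ 𝔪 → ℓ ∉ P) {m : M} {k : ℕ} (hk : ℓ ^ k • m = 0) :
    ∃ e, ∀ q ∈ 𝔪 ^ e, q • m = 0 := by
  set N := A ∙ m
  have hann (r : A) : r ∈ N.annihilator ↔ r • m = 0 := Submodule.mem_annihilator_span_singleton m r
  have h𝔪 : 𝔪 ≤ N.annihilator.radical := by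
    rw [← Ideal.sInf_minimalPrimes]
    refine le_sInf fun P hP => ?_
    have hPN : P ∈ associatedPrimes A N :=
      Module.associatedPrimes.minimalPrimes_annihilator_subset_associatedPrimes A N hP
    have hPM : P ∈ associatedPrimes A M :=
      associatedPrimes.subset_of_injective N.injective_subtype hPN
    have hℓP : ℓ ∈ P := hP.isPrime.mem_of_pow_mem k (hP.1.2 ((hann _).2 hk))
    obtain rfl : P = 𝔪 := by_contra fun h => hℓ P hPM h hℓP
    exact le_rfl
  obtain ⟨e, he⟩ := Ideal.exists_pow_le_of_le_radical_of_fg h𝔪 (IsNoetherian.noetherian 𝔪)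
  exact ⟨e, fun q hq => (hann q).1 (he hq)⟩

theorem Ideal.exists_pow_mul_mem_of_pow_mul_mem {A : Type*} [CommRing A] [IsNoetherianRing A]
    {C 𝔪 : Ideal A} {ℓ : A} (hℓ : ∀ P ∈ associatedPrimes A (A ⧸ C), P ≠ 𝔪 → ℓ ∉ P) {y : A}
    {k : ℕ} (hk : ℓ ^ k * y ∈ C) : ∃ e, ∀ q ∈ 𝔪 ^ e, q * y ∈ C := by
  have hmk (r : A) : r * y ∈ C ↔ r • Ideal.Quotient.mk C y = 0 := by
    rw [Algebra.smul_def, Ideal.Quotient.algebraMap_eq, ← map_mul, Ideal.Quotient.eq_zero_iff_mem]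
  obtain ⟨e, he⟩ := exists_pow_smul_eq_zero_of_pow_smul_eq_zero hℓ ((hmk _).1 hk)
  exact ⟨e, fun q hq => (hmk q).2 (he q hq)⟩

open Polynomial in
theorem mem_intClo_of_monic_of_eval_eq_zero {A : Type} [CommRing A] [Nontrivial A]
    {I : Ideal A} {p : A[X]} (hp : p.Monic) (hcoeff : ∀ i, p.coeff i ∈ I ^ (p.natDegree - i))
    {x : A} (hx : p.eval x = 0) : x ∈ intClo I := by
  set t := p.natDegree
  have ht : 0 < t := by
    refine Nat.pos_of_ne_zero fun h => ?_
    rw [hp.natDegree_eq_zero.mp h, eval_one] at hx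
    exact one_ne_zero hx
  refine ⟨t, fun i => p.coeff (t - i), ht,
    fun i _ hi => by simpa [Nat.sub_sub_self hi] using hcoeff (t - i), ?_⟩
  rw [eval_eq_sum_range, Finset.sum_range_succ, hp.coeff_natDegree, one_mul] at hx
  rw [← hx, add_comm, ← Finset.Ico_add_one_right_eq_Icc,
    Finset.sum_Ico_reflect (fun j => p.coeff j * x ^ j) 1 le_rfl, Nat.sub_self,
    Nat.add_sub_cancel, Finset.range_eq_Ico]

theorem mem_intClo_of_forall_mul_mem_mul {A : Type} [CommRing A] [IsDomain A] {I N : Ideal A}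
    (hN : N.FG) (hN0 : N ≠ ⊥) {x : A} (hx : ∀ q ∈ N, x * q ∈ I * N) : x ∈ intClo I := by
  have : Module.Finite A N := Module.Finite.iff_fg.mpr hN
  obtain ⟨p, hp, -, hcoeff, hpx⟩ :=
    LinearMap.exists_monic_and_natDegree_eq_and_coeff_mem_pow_and_aeval_eq_zero A
      (algebraMap A (Module.End A N) x) I fun _ ⟨w, hw⟩ => by
        rw [← hw, Submodule.mem_smul_top_iff]; exact hx w w.2
  rw [Polynomial.aeval_algebraMap_apply_eq_algebraMap_eval] at hpx
  obtain ⟨q, hqN, hq0⟩ := Submodule.exists_mem_ne_zero_of_ne_bot hN0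
  have : p.eval x * q = 0 := congrArg Subtype.val (LinearMap.congr_fun hpx ⟨q, hqN⟩)
  exact mem_intClo_of_monic_of_eval_eq_zero hp hcoeff ((mul_eq_zero.mp this).resolve_right hq0)

namespace MvPolynomial

variable {σ R : Type*} [CommRing R]

attribute [local instance] MvPolynomial.gradedAlgebra

theorem IsHomogeneous.homogeneousComponent_mul_left {p : MvPolynomial σ R} {i : ℕ}
    (hp : p.IsHomogeneous i) (q : MvPolynomial σ R) (j : ℕ) :
    homogeneousComponent j (p * q) = if i ≤ j then p * homogeneousComponent (j - i) q else 0 := by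
  simp only [← decomposition.decompose'_apply]
  exact DirectSum.coe_decompose_mul_of_left_mem (homogeneousSubmodule σ R) j hp

theorem IsHomogeneous.mem_pow_idealOfVars {p : MvPolynomial σ R} {e : ℕ}
    (hp : p.IsHomogeneous e) : p ∈ idealOfVars σ R ^ e :=
  (mem_pow_idealOfVars_iff e p).mpr fun _ hs =>
    (not_not.mp fun h => mem_support_iff.mp hs (hp.coeff_eq_zero h)).ge

theorem homogeneousComponent_mem_pow_idealOfVars {q : MvPolynomial σ R} {k : ℕ}
    (hq : q ∈ idealOfVars σ R ^ k) (e : ℕ) : homogeneousComponent e q ∈ idealOfVars σ R ^ k := by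
  rw [mem_pow_idealOfVars_iff] at hq ⊢
  intro s hs
  rw [support_homogeneousComponent, Finset.mem_filter] at hs
  exact hq s hs.1

theorem homogeneousComponent_eq_zero_of_mem_pow_idealOfVars {q : MvPolynomial σ R} {k e : ℕ}
    (hq : q ∈ idealOfVars σ R ^ k) (he : e < k) : homogeneousComponent e q = 0 := by
  rw [← support_eq_empty, Finset.eq_empty_iff_forall_notMem]
  intro s hs
  rw [support_homogeneousComponent, Finset.mem_filter] at hs
  exact (hs.2 ▸ he).not_ge ((mem_pow_idealOfVars_iff k q).mp hq s hs.1)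

end MvPolynomial

theorem Mi_eq_idealOfVars : Mi K n = idealOfVars (Fin n) K := rfl

theorem mul_mem_comp {I : Ideal (Rn K n)} {f g : Rn K n} {i d : ℕ} (hfI : f ∈ I)
    (hf : f.IsHomogeneous i) (hid : i ≤ d) (hg : g ∈ Mi K n ^ (d - i)) : f * g ∈ comp I d := by
  rw [Mi_eq_idealOfVars, pow_idealOfVars_eq_span] at hg
  induction hg using Submodule.span_induction with
  | mem g hg =>
    obtain ⟨s, hs, rfl⟩ := hg
    refine Ideal.subset_span ⟨I.mul_mem_right _ hfI, ?_⟩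
    simpa only [Nat.add_sub_cancel' hid] using hf.mul (isHomogeneous_monomial (1 : K) hs)
  | zero => rw [mul_zero]; exact zero_mem _
  | add g g' _ _ hg hg' => rw [mul_add]; exact add_mem hg hg'
  | smul r g _ hg => rw [smul_eq_mul, mul_left_comm]; exact Ideal.mul_mem_left _ r hg

theorem homogeneousComponent_mem_comp_of_mem_mul_pow {I : Ideal (Rn K n)} (hI : IsHomog I)
    {k : ℕ} {w : Rn K n} (hw : w ∈ I * Mi K n ^ k) (d : ℕ) :
    homogeneousComponent (d + k) w ∈ comp I d := by
  refine Submodule.mul_induction_on hw (fun a ha m hm => ?_) fun w w' hw hw' => ?_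
  · rw [← a.sum_homogeneousComponent, Finset.sum_mul, map_sum]
    refine sum_mem fun i _ => ?_
    rw [(homogeneousComponent_isHomogeneous i a).homogeneousComponent_mul_left]
    split_ifs with hik
    · by_cases hid : i ≤ d
      · refine mul_mem_comp (hI a ha i) (homogeneousComponent_isHomogeneous i a) hid ?_
        exact Ideal.pow_le_pow_right (by omega)
          (homogeneousComponent_isHomogeneous _ m).mem_pow_idealOfVars
      · rw [homogeneousComponent_eq_zero_of_mem_pow_idealOfVars hm (by omega), mul_zero]
        exact zero_mem _
    · exact zero_mem _
  · rw [map_add]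
    exact add_mem hw hw'

theorem mem_mul_pow_of_mem_comp {I : Ideal (Rn K n)} {d e : ℕ} {z : Rn K n}
    (hz : z ∈ comp I d) (hzd : z.IsHomogeneous (d + e)) : z ∈ I * Mi K n ^ e := by
  obtain ⟨N, r, f, rfl⟩ := Submodule.mem_span_set'.mp hz
  rw [← homogeneousComponent_eq_self hzd, map_sum]
  refine sum_mem fun j _ => ?_
  obtain ⟨hfI, hf⟩ := (f j).2
  rw [smul_eq_mul, mul_comm (r j), hf.homogeneousComponent_mul_left, if_pos (by omega),
    Nat.add_sub_cancel_left]
  exact Ideal.mul_mem_mul hfI (homogeneousComponent_isHomogeneous e _).mem_pow_idealOfVars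

theorem exists_forall_mul_mem_mul_pow {I : Ideal (Rn K n)} {x : Rn K n}
    (hx : ∀ d, ∃ e, ∀ q ∈ Mi K n ^ e, q * homogeneousComponent d x ∈ comp I d) :
    ∃ m, ∀ q ∈ Mi K n ^ m, x * q ∈ I * Mi K n ^ m := by
  choose e he using hx
  set m := (Finset.range (x.totalDegree + 1)).sup e
  refine ⟨m, fun q hq => ?_⟩
  rw [← x.sum_homogeneousComponent, Finset.sum_mul]
  refine sum_mem fun d hd => ?_
  rw [← q.sum_homogeneousComponent, Finset.mul_sum]
  refine sum_mem fun j _ => ?_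
  obtain hj | hj := lt_or_ge j m
  · rw [homogeneousComponent_eq_zero_of_mem_pow_idealOfVars hq hj, mul_zero]
    exact zero_mem _
  · have hqj : homogeneousComponent j q ∈ Mi K n ^ e d := Ideal.pow_le_pow_right
      (Finset.le_sup hd) (homogeneousComponent_mem_pow_idealOfVars hq j)
    have hdeg := (homogeneousComponent_isHomogeneous j q).mul
      (homogeneousComponent_isHomogeneous d x)
    rw [add_comm] at hdeg
    have hmem : homogeneousComponent j q * homogeneousComponent d x ∈ I * Mi K n ^ j :=
      mem_mul_pow_of_mem_comp (he d _ hqj) hdeg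
    rw [mul_comm (homogeneousComponent d x)]
    exact Ideal.mul_mono_right (Ideal.pow_le_pow_right hj) hmem

theorem add_mul_pow_mem_mul_pow {J : Ideal (Rn K n)} {ℓ : Rn K n} (hℓ : ℓ ∈ Mi K n)
    {m₁ m₂ : Rn K n} {k₁ k₂ : ℕ} (hm₁ : m₁ ∈ J * Mi K n ^ k₁) (hm₂ : m₂ ∈ J * Mi K n ^ k₂) :
    m₁ * ℓ ^ k₂ + m₂ * ℓ ^ k₁ ∈ J * Mi K n ^ (k₁ + k₂) := by
  have h₁ := Ideal.mul_mem_mul hm₁ (Ideal.pow_mem_pow hℓ k₂)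
  have h₂ := Ideal.mul_mem_mul hm₂ (Ideal.pow_mem_pow hℓ k₁)
  rw [mul_assoc, ← pow_add] at h₁ h₂
  exact add_mem h₁ (add_comm k₂ k₁ ▸ h₂)

theorem exists_mul_pow_eq_of_mem_quadExt {ℓ : Rn K n} (hℓ : ℓ ∈ Mi K n)
    {s : Localization.Away ℓ} (hs : s ∈ quadExt ℓ) :
    ∃ k, ∃ m ∈ Mi K n ^ k, s * algebraMap _ _ ℓ ^ k = algebraMap _ _ m := by
  induction hs using Algebra.adjoin_induction with
  | mem s hs =>
    obtain ⟨m, hm, hs⟩ := hs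
    exact ⟨1, m, by rwa [pow_one], by rwa [pow_one]⟩
  | algebraMap r => exact ⟨0, r, by simp, by simp⟩
  | add s t _ _ hs ht =>
    obtain ⟨k₁, m₁, hm₁, he₁⟩ := hs
    obtain ⟨k₂, m₂, hm₂, he₂⟩ := ht
    refine ⟨k₁ + k₂, m₁ * ℓ ^ k₂ + m₂ * ℓ ^ k₁, ?_, ?_⟩
    · simpa only [Ideal.top_mul] using add_mul_pow_mem_mul_pow (J := ⊤) hℓ
        (by rwa [Ideal.top_mul]) (by rwa [Ideal.top_mul])
    · rw [map_add, map_mul, map_mul, map_pow, map_pow, ← he₁, ← he₂]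
      ring
  | mul s t _ _ hs ht =>
    obtain ⟨k₁, m₁, hm₁, he₁⟩ := hs
    obtain ⟨k₂, m₂, hm₂, he₂⟩ := ht
    refine ⟨k₁ + k₂, m₁ * m₂, by rw [pow_add]; exact Ideal.mul_mem_mul hm₁ hm₂, ?_⟩
    rw [map_mul, ← he₁, ← he₂]
    ring

theorem exists_pow_mul_mem_of_mem_contraction {I : Ideal (Rn K n)} {ℓ : Rn K n} (hℓ₀ : ℓ ≠ 0)
    (hℓ : ℓ ∈ Mi K n) {x : Rn K n} (hx : x ∈ contraction I ℓ) :
    ∃ k, ℓ ^ k * x ∈ I * Mi K n ^ k := by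
  have key : ∀ w ∈ I.map (algebraMap (Rn K n) (quadExt ℓ)),
      ∃ k, ∃ m ∈ I * Mi K n ^ k, (w : Localization.Away ℓ) * algebraMap _ _ ℓ ^ k =
        algebraMap _ _ m := by
    intro w hw
    induction hw using Submodule.span_induction with
    | mem w hw =>
      obtain ⟨a, ha, rfl⟩ := hw
      exact ⟨0, a, by rwa [pow_zero, mul_one], by simp⟩
    | zero => exact ⟨0, 0, zero_mem _, by simp⟩
    | add u v _ _ hu hv =>
      obtain ⟨k₁, m₁, hm₁, he₁⟩ := hu
      obtain ⟨k₂, m₂, hm₂, he₂⟩ := hv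
      refine ⟨k₁ + k₂, _, add_mul_pow_mem_mul_pow hℓ hm₁ hm₂, ?_⟩
      rw [Subalgebra.coe_add, map_add, map_mul, map_mul, map_pow, map_pow, ← he₁, ← he₂]
      ring
    | smul s u _ hu =>
      obtain ⟨k₁, m₁, hm₁, he₁⟩ := hu
      obtain ⟨k₂, m₂, hm₂, he₂⟩ := exists_mul_pow_eq_of_mem_quadExt hℓ s.2
      refine ⟨k₁ + k₂, m₁ * m₂, ?_, ?_⟩
      · rw [pow_add, ← mul_assoc]
        exact Ideal.mul_mem_mul hm₁ hm₂
      · rw [smul_eq_mul, Subalgebra.coe_mul, map_mul, ← he₁, ← he₂]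
        ring
  obtain ⟨k, m, hm, he⟩ := key _ hx
  have hinj : Function.Injective (algebraMap (Rn K n) (Localization.Away ℓ)) :=
    IsLocalization.injective _ (powers_le_nonZeroDivisors_of_noZeroDivisors hℓ₀)
  have hkx : ℓ ^ k * x = m := hinj (by rw [map_mul, map_pow, mul_comm]; exact he)
  exact ⟨k, hkx ▸ hm⟩

/-- if the linear form `ℓ` avoids all primes in `⋃_j Ass(R/I_⟨j⟩)` other
than `M`, then `I ⊆ IS ∩ R ⊆ Ī` for `S = R[M/ℓ]`. -/
theorem stmt7 (K : Type) [Field K] (n : ℕ) (I : Ideal (Rn K n)) (hI : IsHomog I)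
    (ℓ : Rn K n) (hℓ0 : ℓ ≠ 0) (hℓ : ℓ.IsHomogeneous 1)
    (hU : ∀ j : ℕ, ∀ P ∈ associatedPrimes (Rn K n) (Rn K n ⧸ comp I j),
      P ≠ Mi K n → ℓ ∉ P) :
    I ≤ contraction I ℓ ∧ ∀ x ∈ contraction I ℓ, x ∈ intClo I := by
  refine ⟨Ideal.le_comap_map, fun x hx => ?_⟩
  have hℓM : ℓ ∈ Mi K n := by
    have h : ℓ ∈ Mi K n ^ 1 := hℓ.mem_pow_idealOfVars
    rwa [pow_one] at h
  obtain ⟨k, hk⟩ := exists_pow_mul_mem_of_mem_contraction hℓ0 hℓM hx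
  have hℓk : (ℓ ^ k).IsHomogeneous k := by simpa using hℓ.pow k
  have hcomp (d : ℕ) : ℓ ^ k * homogeneousComponent d x ∈ comp I d := by
    have := homogeneousComponent_mem_comp_of_mem_mul_pow hI hk d
    rwa [hℓk.homogeneousComponent_mul_left, if_pos (by omega), Nat.add_sub_cancel] at this
  obtain ⟨m, hm⟩ := exists_forall_mul_mem_mul_pow fun d =>
    Ideal.exists_pow_mul_mem_of_pow_mul_mem (hU d) (hcomp d)
  have hMm : Mi K n ^ m ≠ ⊥ :=
    (Submodule.ne_bot_iff _).mpr ⟨ℓ ^ m, Ideal.pow_mem_pow hℓM m, pow_ne_zero m hℓ0⟩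
  exact mem_intClo_of_forall_mul_mem_mul (IsNoetherian.noetherian _) hMm hm
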